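/- arXiv:1402.4432 — 3 statements merged into one kernel-verified Lean document; each statement's English description precedes it below -/
import Mathlib

section
/- Let k be a commutative ring and n ≥ 0. The composite d_0 ∘ h_0 : Δ_n[t] → Δ_n[t] is the identity homomorphism. Here h_0 : Δ_n[t] → Δ_{n+1}[t] sends t to t·(t_1+⋯+t_{n+1}) and acts on Δ_n by the degeneracy s_0, and d_0 : Δ_{n+1}[t] → Δ_n[t] is the coefficientwise extension (fixing t) of the face map d_0 : Δ_{n+1} → Δ_n. -/
open MvPolynomial

/-- `SimplexAlg k n` is the `k`-algebra `Δ_n = k[t_0,…,t_n]/(t_0+⋯+t_n − 1)`. -/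
noncomputable abbrev SimplexAlg (k : Type*) [CommRing k] (n : ℕ) : Type _ :=
  MvPolynomial (Fin (n + 1)) k ⧸
    Ideal.span {(∑ i, X i : MvPolynomial (Fin (n + 1)) k) - 1}

/-- The image of the variable `t_i` in `Δ_n`. -/
noncomputable def tv (k : Type*) [CommRing k] (n : ℕ) (i : Fin (n + 1)) : SimplexAlg k n :=
  Ideal.Quotient.mk _ (X i)

/-- `IsFace k n r f` says that the `k`-algebra homomorphism `f : Δ_{n+1} → Δ_n` satisfies the
defining conditions of the face map `d_r`: `d_r(t_i) = t_i` for `i < r`, `d_r(t_r) = 0`, and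
`d_r(t_i) = t_{i-1}` for `i > r`. -/
def IsFace (k : Type*) [CommRing k] (n r : ℕ)
    (f : SimplexAlg k (n + 1) →ₐ[k] SimplexAlg k n) : Prop :=
  (∀ (i : Fin (n + 2)) (_ : (i : ℕ) < r) (h' : (i : ℕ) < n + 1),
      f (tv k (n + 1) i) = tv k n ⟨i, h'⟩) ∧
  (∀ i : Fin (n + 2), (i : ℕ) = r → f (tv k (n + 1) i) = 0) ∧
  (∀ (i : Fin (n + 2)) (_ : r < (i : ℕ)),
      f (tv k (n + 1) i) = tv k n ⟨(i : ℕ) - 1, by have := i.isLt; omega⟩)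

/-- `IsDegen k n r f` says that the `k`-algebra homomorphism `f : Δ_n → Δ_{n+1}` satisfies the
defining conditions of the degeneracy map `s_r`: `s_r(t_i) = t_i` for `i < r`,
`s_r(t_r) = t_r + t_{r+1}`, and `s_r(t_i) = t_{i+1}` for `i > r`. -/
def IsDegen (k : Type*) [CommRing k] (n r : ℕ)
    (f : SimplexAlg k n →ₐ[k] SimplexAlg k (n + 1)) : Prop :=
  (∀ (i : Fin (n + 1)) (_ : (i : ℕ) < r),
      f (tv k n i) = tv k (n + 1) ⟨i, by have := i.isLt; omega⟩) ∧
  (∀ i : Fin (n + 1), (i : ℕ) = r →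
      f (tv k n i) = tv k (n + 1) ⟨i, by have := i.isLt; omega⟩ +
        tv k (n + 1) ⟨(i : ℕ) + 1, by have := i.isLt; omega⟩) ∧
  (∀ (i : Fin (n + 1)) (_ : r < (i : ℕ)),
      f (tv k n i) = tv k (n + 1) ⟨(i : ℕ) + 1, by have := i.isLt; omega⟩)

/-- The element `t_{j+1} + ⋯ + t_{n+1}` of `Δ_{n+1}`. -/
noncomputable def tailSum (k : Type*) [CommRing k] (n j : ℕ) : SimplexAlg k (n + 1) :=
  ∑ i : Fin (n + 2), if j + 1 ≤ (i : ℕ) then tv k (n + 1) i else 0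

/-- `IsHtpy k n j s h` says that the `k`-algebra homomorphism `h : Δ_n[t] → Δ_{n+1}[t]`
sends `t` to `t·(t_{j+1}+⋯+t_{n+1})` and restricts on `Δ_n` to `s` (to be the degeneracy `s_j`). -/
def IsHtpy (k : Type*) [CommRing k] (n j : ℕ)
    (s : SimplexAlg k n →ₐ[k] SimplexAlg k (n + 1))
    (h : Polynomial (SimplexAlg k n) →ₐ[k] Polynomial (SimplexAlg k (n + 1))) : Prop :=
  h Polynomial.X = Polynomial.C (tailSum k n j) * Polynomial.X ∧
  ∀ a : SimplexAlg k n, h (Polynomial.C a) = Polynomial.C (s a)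

/-- `IsPolyExt f F` says that `F` is the coefficientwise extension of `f` to polynomial rings,
fixing the variable `t`. -/
def IsPolyExt {k B₁ B₂ : Type*} [CommRing k] [CommRing B₁] [CommRing B₂]
    [Algebra k B₁] [Algebra k B₂] (f : B₁ →ₐ[k] B₂)
    (F : Polynomial B₁ →ₐ[k] Polynomial B₂) : Prop :=
  F Polynomial.X = Polynomial.X ∧ ∀ b : B₁, F (Polynomial.C b) = Polynomial.C (f b)

lemma sum_tv (k : Type*) [CommRing k] (n : ℕ) : ∑ i, tv k n i = 1 := by
  have : (∑ i, tv k n i) - 1 = 0 := by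
    simp only [tv, ← map_sum]
    rw [show (1 : SimplexAlg k n) = Ideal.Quotient.mk _ 1 from rfl, ← map_sub,
      Ideal.Quotient.eq_zero_iff_mem]
    exact Ideal.subset_span rfl
  linear_combination this

lemma face_zero_comp_degen_zero (k : Type*) [CommRing k] (n : ℕ)
    (s0 : SimplexAlg k n →ₐ[k] SimplexAlg k (n + 1)) (hs0 : IsDegen k n 0 s0)
    (d0 : SimplexAlg k (n + 1) →ₐ[k] SimplexAlg k n) (hd0 : IsFace k n 0 d0)
    (a : SimplexAlg k n) : d0 (s0 a) = a := by
  have : d0.comp s0 = AlgHom.id k (SimplexAlg k n) := by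
    apply Ideal.Quotient.algHom_ext
    apply MvPolynomial.algHom_ext
    intro i
    show d0 (s0 (tv k n i)) = tv k n i
    rcases Nat.eq_zero_or_pos (i : ℕ) with hi | hi
    · rw [hs0.2.1 i hi, map_add,
        hd0.2.1 ⟨i, by omega⟩ (by simpa using hi),
        hd0.2.2 ⟨(i : ℕ) + 1, by omega⟩ (by simpa)]
      simp [hi]
      congr 1
      exact Fin.ext (by simp [hi])
    · rw [hs0.2.2 i hi, hd0.2.2 ⟨(i : ℕ) + 1, by omega⟩ (by simpa using Nat.succ_pos _)]
      congr 1
  exact AlgHom.congr_fun this a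

lemma face_zero_tailSum (k : Type*) [CommRing k] (n : ℕ)
    (d0 : SimplexAlg k (n + 1) →ₐ[k] SimplexAlg k n) (hd0 : IsFace k n 0 d0) :
    d0 (tailSum k n 0) = 1 := by
  rw [tailSum, map_sum, Fin.sum_univ_succ]
  rw [show (if 0 + 1 ≤ (((0 : Fin (n + 2))) : ℕ) then tv k (n + 1) 0 else 0) = 0 by simp,
    map_zero, zero_add]
  have : ∀ j : Fin (n + 1),
      d0 (if 0 + 1 ≤ ((j.succ : Fin (n + 2)) : ℕ) then tv k (n + 1) j.succ else 0) = tv k n j := by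
    intro j
    rw [if_pos (by simp)]
    rw [hd0.2.2 j.succ (by simp)]
    congr 1
  rw [Finset.sum_congr rfl fun j _ => this j]
  exact sum_tv k n

/-- the composite `d_0 ∘ h_0 : Δ_n[t] → Δ_n[t]` is the identity, where
`h_0` sends `t` to `t·(t_1+⋯+t_{n+1})` and acts on `Δ_n` by the degeneracy `s_0`, and `d_0` is
the coefficientwise extension (fixing `t`) of the face map `d_0 : Δ_{n+1} → Δ_n`. -/
theorem face_zero_comp_htpy_zero (k : Type*) [CommRing k] (n : ℕ)
    (s0 : SimplexAlg k n →ₐ[k] SimplexAlg k (n + 1)) (hs0 : IsDegen k n 0 s0)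
    (h0 : Polynomial (SimplexAlg k n) →ₐ[k] Polynomial (SimplexAlg k (n + 1)))
    (hh0 : IsHtpy k n 0 s0 h0)
    (d0 : SimplexAlg k (n + 1) →ₐ[k] SimplexAlg k n) (hd0 : IsFace k n 0 d0)
    (D0 : Polynomial (SimplexAlg k (n + 1)) →ₐ[k] Polynomial (SimplexAlg k n))
    (hD0 : IsPolyExt d0 D0) :
    D0.comp h0 = AlgHom.id k (Polynomial (SimplexAlg k n)) := by
  apply AlgHom.ext; intro p
  induction p using Polynomial.induction_on with
  | C a =>
    simp [hh0.2 a, hD0.2, face_zero_comp_degen_zero k n s0 hs0 d0 hd0]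
  | add p q hp hq =>
    simp only [map_add] at *
    rw [hp, hq]
  | monomial m i h =>
    simp only [pow_succ, ← mul_assoc, map_mul] at *
    rw [h]
    congr 1
    show D0 (h0 Polynomial.X) = _
    rw [hh0.1, map_mul, hD0.1, hD0.2, face_zero_tailSum k n d0 hd0]
    simp
end

section
/- Let k be a commutative ring and n ≥ 0. The composite d_{n+1} ∘ h_n : Δ_n[t] → Δ_n[t] equals the k-algebra homomorphism that is the identity on Δ_n and sends t to 0 (i.e. the coefficientwise extension of the composite ι ∘ ev_0 of evaluation of t at 0 followed by the inclusion of constants). Here h_n : Δ_n[t] → Δ_{n+1}[t] sends t to t·t_{n+1} and acts on Δ_n by the degeneracy s_n, and d_{n+1} : Δ_{n+1}[t] → Δ_n[t] is the coefficientwise extension (fixing t) of the face map d_{n+1} : Δ_{n+1} → Δ_n. -/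
open MvPolynomial

/-- the composite `d_{n+1} ∘ h_n : Δ_n[t] → Δ_n[t]` equals the `k`-algebra
homomorphism which is the identity on `Δ_n` and sends `t` to `0`, i.e. `p ↦ C (p.eval 0)`.
Here `h_n` sends `t` to `t·t_{n+1}` and acts on `Δ_n` by the degeneracy `s_n`, and `d_{n+1}` is
the coefficientwise extension (fixing `t`) of the face map `d_{n+1} : Δ_{n+1} → Δ_n`. -/
theorem face_top_comp_htpy_top (k : Type*) [CommRing k] (n : ℕ)
    (sn : SimplexAlg k n →ₐ[k] SimplexAlg k (n + 1)) (hsn : IsDegen k n n sn)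
    (hn : Polynomial (SimplexAlg k n) →ₐ[k] Polynomial (SimplexAlg k (n + 1)))
    (hhn : IsHtpy k n n sn hn)
    (dn1 : SimplexAlg k (n + 1) →ₐ[k] SimplexAlg k n) (hdn1 : IsFace k n (n + 1) dn1)
    (Dn1 : Polynomial (SimplexAlg k (n + 1)) →ₐ[k] Polynomial (SimplexAlg k n))
    (hDn1 : IsPolyExt dn1 Dn1) :
    ∀ p : Polynomial (SimplexAlg k n), Dn1 (hn p) = Polynomial.C (p.eval 0) := by
  have key : ∀ a : SimplexAlg k n, dn1 (sn a) = a := by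
    have h : (dn1.comp sn) = AlgHom.id k (SimplexAlg k n) := by
      apply Ideal.Quotient.algHom_ext
      apply MvPolynomial.algHom_ext
      intro i
      have hlt := i.isLt
      show dn1 (sn (tv k n i)) = tv k n i
      rcases lt_or_eq_of_le (Nat.lt_succ_iff.mp hlt) with h | h
      · rw [hsn.1 i h, hdn1.1 _ (by simpa using by omega) (by simpa using by omega)]
      · rw [hsn.2.1 i h, map_add,
          hdn1.1 _ (by simpa using by omega) (by simpa using by omega),
          hdn1.2.1 _ (by simpa using by omega)]
        simp
    intro a
    exact AlgHom.congr_fun h a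
  have htail : tailSum k n n = tv k (n+1) ⟨n+1, by omega⟩ := by
    unfold tailSum
    rw [Finset.sum_eq_single (⟨n+1, by omega⟩ : Fin (n+2))]
    · simp
    · intro b _ hb
      have : ¬ (n + 1 ≤ (b : ℕ)) := by
        have := b.isLt
        simp [Fin.ext_iff] at hb
        omega
      simp [this]
    · simp
  have hX : Dn1 (hn Polynomial.X) = 0 := by
    rw [hhn.1, htail, map_mul, hDn1.1, hDn1.2, hdn1.2.1 _ (by simp)]
    simp
  have hC : ∀ a : SimplexAlg k n, Dn1 (hn (Polynomial.C a)) = Polynomial.C a := by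
    intro a
    rw [hhn.2, hDn1.2, key]
  intro p
  induction p using Polynomial.induction_on with
  | C a => rw [hC, Polynomial.eval_C]
  | add p q hp hq =>
      rw [map_add, map_add, Polynomial.eval_add, Polynomial.C_add, hp, hq]
  | monomial m a ih =>
      rw [map_mul, map_pow, map_mul, map_pow, hX, hC]
      simp
end

section
/- Let k be a commutative ring and n ≥ 0. The maps h_j satisfy the simplicial-homotopy identities with respect to the face maps: (a) d_i ∘ h_j = h_{j−1} ∘ d_i : Δ_n[t] → Δ_n[t] for 0 ≤ i < j ≤ n (with n ≥ 1); (b) d_{j+1} ∘ h_{j+1} = d_{j+1} ∘ h_j : Δ_n[t] → Δ_n[t] for 0 ≤ j ≤ n−1; (c) d_i ∘ h_j = h_j ∘ d_{i−1} : Δ_n[t] → Δ_n[t] for 0 ≤ j ≤ n and j+1 < i ≤ n+1 (with n ≥ 1 in case (c)). -/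
open MvPolynomial

/-! Both sides of each identity are coefficientwise extensions of an algebra map between simplex
algebras, followed by a substitution `t ↦ c t`, and such a map is determined by the pair (algebra
map, `c`). Composing, each identity splits into a simplicial identity between faces and
degeneracies, checked on the coordinates `t_l`, and an identity between the images of the sums
`t_{j+1} + ⋯ + t_{n+1}` under a face map `d_r`, which deletes `t_r` and renumbers the coordinates
above it. -/

section FaceCompHtpy

open Finset

/-- Natural-number indexing of the coordinates (with the junk value `0` beyond `n`) keeps the
index arithmetic out of `Fin`. -/
noncomputable def tvNat (k : Type*) [CommRing k] (n i : ℕ) : SimplexAlg k n :=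
  if h : i < n + 1 then tv k n ⟨i, h⟩ else 0

variable {k : Type*} [CommRing k]

theorem tvNat_val {n : ℕ} (i : Fin (n + 1)) : tvNat k n i = tv k n i :=
  dif_pos i.isLt

theorem tvNat_of_le {n i : ℕ} (h : n + 1 ≤ i) : tvNat k n i = 0 :=
  dif_neg (by omega)

theorem SimplexAlg.algHom_ext {n : ℕ} {B : Type*} [Semiring B] [Algebra k B]
    {f g : SimplexAlg k n →ₐ[k] B} (h : ∀ i < n + 1, f (tvNat k n i) = g (tvNat k n i)) :
    f = g :=
  Ideal.Quotient.algHom_ext k <| MvPolynomial.algHom_ext fun i => by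
    simpa [tvNat_val, tv] using h i i.isLt

theorem tailSum_eq_sum_Ico (n j : ℕ) :
    tailSum k n j = ∑ i ∈ Ico (j + 1) (n + 2), tvNat k (n + 1) i := by
  have hIco : (range (n + 2)).filter (j + 1 ≤ ·) = Ico (j + 1) (n + 2) := by
    ext i; simp only [mem_filter, mem_range, mem_Ico]; omega
  simp only [tailSum, ← tvNat_val]
  rw [Fin.sum_univ_eq_sum_range (fun i => if j + 1 ≤ i then tvNat k (n + 1) i else 0),
    ← sum_filter, hIco]

section Face

variable {n r l : ℕ} {d : SimplexAlg k (n + 1) →ₐ[k] SimplexAlg k n}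

theorem IsFace.map_tvNat_of_lt (hd : IsFace k n r d) (hr : r ≤ n + 1) (hl : l < r) :
    d (tvNat k (n + 1) l) = tvNat k n l := by
  simp only [tvNat, dif_pos (show l < n + 2 by omega), dif_pos (show l < n + 1 by omega)]
  exact hd.1 ⟨l, by omega⟩ hl (show l < n + 1 by omega)

theorem IsFace.map_tvNat_of_eq (hd : IsFace k n r d) (hl : l = r) :
    d (tvNat k (n + 1) l) = 0 := by
  by_cases h : l < n + 2
  · rw [tvNat, dif_pos h, hd.2.1 _ hl]
  · rw [tvNat_of_le (by omega), map_zero]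

theorem IsFace.map_tvNat_of_gt (hd : IsFace k n r d) (hl : r < l) :
    d (tvNat k (n + 1) l) = tvNat k n (l - 1) := by
  by_cases h : l < n + 2
  · simp only [tvNat, dif_pos h, dif_pos (show l - 1 < n + 1 by omega)]
    exact hd.2.2 ⟨l, h⟩ hl
  · rw [tvNat_of_le (by omega), tvNat_of_le (by omega), map_zero]

theorem IsFace.map_sum_Ico_succ_succ (hd : IsFace k n r d) {a b : ℕ} (hra : r ≤ a) :
    d (∑ i ∈ Ico (a + 1) (b + 1), tvNat k (n + 1) i) = ∑ i ∈ Ico a b, tvNat k n i := by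
  rw [← sum_Ico_add', map_sum]
  refine sum_congr rfl fun i hi => ?_
  rw [hd.map_tvNat_of_gt (by have := (mem_Ico.1 hi).1; omega), Nat.add_sub_cancel]

theorem IsFace.map_sum_Ico_succ_right (hd : IsFace k n r d) (hr : r ≤ n + 1) {a b : ℕ}
    (har : a ≤ r) (hrb : r ≤ b) :
    d (∑ i ∈ Ico a (b + 1), tvNat k (n + 1) i) = ∑ i ∈ Ico a b, tvNat k n i := by
  rw [← sum_Ico_consecutive _ har (by omega : r ≤ b + 1),
    sum_eq_sum_Ico_succ_bot (by omega : r < b + 1), map_add, map_add, map_sum,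
    hd.map_tvNat_of_eq rfl, zero_add, hd.map_sum_Ico_succ_succ le_rfl,
    ← sum_Ico_consecutive _ har hrb]
  congr 1
  exact sum_congr rfl fun i hi => hd.map_tvNat_of_lt hr (mem_Ico.1 hi).2

end Face

section Degen

variable {n r l : ℕ} {s : SimplexAlg k n →ₐ[k] SimplexAlg k (n + 1)}

theorem IsDegen.map_tvNat_of_lt (hs : IsDegen k n r s) (hr : r ≤ n) (hl : l < r) :
    s (tvNat k n l) = tvNat k (n + 1) l := by
  simp only [tvNat, dif_pos (show l < n + 1 by omega), dif_pos (show l < n + 2 by omega)]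
  exact hs.1 ⟨l, by omega⟩ hl

theorem IsDegen.map_tvNat_of_eq (hs : IsDegen k n r s) (hr : r ≤ n) (hl : l = r) :
    s (tvNat k n l) = tvNat k (n + 1) l + tvNat k (n + 1) (l + 1) := by
  simp only [tvNat, dif_pos (show l < n + 1 by omega), dif_pos (show l < n + 2 by omega),
    dif_pos (show l + 1 < n + 2 by omega)]
  exact hs.2.1 ⟨l, by omega⟩ hl

theorem IsDegen.map_tvNat_of_gt (hs : IsDegen k n r s) (hl : r < l) :
    s (tvNat k n l) = tvNat k (n + 1) (l + 1) := by
  by_cases h : l < n + 1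
  · simp only [tvNat, dif_pos h, dif_pos (show l + 1 < n + 2 by omega)]
    exact hs.2.2 ⟨l, h⟩ hl
  · rw [tvNat_of_le (by omega), tvNat_of_le (by omega), map_zero]

end Degen

section SimplicialIdentities

variable {i j : ℕ}

section SameDegree

variable {n : ℕ} {d : SimplexAlg k (n + 1) →ₐ[k] SimplexAlg k n}
  {s : SimplexAlg k n →ₐ[k] SimplexAlg k (n + 1)}

theorem face_comp_degen_self (hd : IsFace k n j d) (hs : IsDegen k n j s) (hj : j ≤ n) :
    d.comp s = AlgHom.id k _ := by
  refine SimplexAlg.algHom_ext fun l _ => ?_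
  rcases lt_trichotomy l j with hl | hl | hl <;>
    simp (disch := omega) only [AlgHom.comp_apply, AlgHom.id_apply, map_add, zero_add,
      Nat.add_sub_cancel, hs.map_tvNat_of_lt, hs.map_tvNat_of_eq, hs.map_tvNat_of_gt,
      hd.map_tvNat_of_lt, hd.map_tvNat_of_eq, hd.map_tvNat_of_gt]

theorem face_succ_comp_degen (hd : IsFace k n (j + 1) d) (hs : IsDegen k n j s) (hj : j ≤ n) :
    d.comp s = AlgHom.id k _ := by
  refine SimplexAlg.algHom_ext fun l _ => ?_
  rcases lt_trichotomy l j with hl | hl | hl <;>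
    simp (disch := omega) only [AlgHom.comp_apply, AlgHom.id_apply, map_add, add_zero,
      Nat.add_sub_cancel, hs.map_tvNat_of_lt, hs.map_tvNat_of_eq, hs.map_tvNat_of_gt,
      hd.map_tvNat_of_lt, hd.map_tvNat_of_eq, hd.map_tvNat_of_gt]

end SameDegree

variable {m : ℕ} {d : SimplexAlg k (m + 2) →ₐ[k] SimplexAlg k (m + 1)}
  {s : SimplexAlg k (m + 1) →ₐ[k] SimplexAlg k (m + 2)}
  {d' : SimplexAlg k (m + 1) →ₐ[k] SimplexAlg k m} {s' : SimplexAlg k m →ₐ[k] SimplexAlg k (m + 1)}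

theorem face_comp_degen_of_lt (hd : IsFace k (m + 1) i d) (hs : IsDegen k (m + 1) j s)
    (hd' : IsFace k m i d') (hs' : IsDegen k m (j - 1) s') (hij : i < j) (hj : j ≤ m + 1) :
    d.comp s = s'.comp d' := by
  refine SimplexAlg.algHom_ext fun l _ => ?_
  rcases lt_trichotomy l i with hl | hl | hl <;>
    rcases lt_trichotomy l j with hl' | hl' | hl' <;>
    first
    | omega
    | simp (disch := omega) only [AlgHom.comp_apply, map_add, map_zero, Nat.add_sub_cancel,
        Nat.sub_add_cancel, hs.map_tvNat_of_lt, hs.map_tvNat_of_eq, hs.map_tvNat_of_gt,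
        hs'.map_tvNat_of_lt, hs'.map_tvNat_of_eq, hs'.map_tvNat_of_gt, hd.map_tvNat_of_lt,
        hd.map_tvNat_of_eq, hd.map_tvNat_of_gt, hd'.map_tvNat_of_lt, hd'.map_tvNat_of_eq,
        hd'.map_tvNat_of_gt]

theorem face_comp_degen_of_succ_lt (hd : IsFace k (m + 1) i d) (hs : IsDegen k (m + 1) j s)
    (hd' : IsFace k m (i - 1) d') (hs' : IsDegen k m j s') (hji : j + 1 < i) (hi : i ≤ m + 2) :
    d.comp s = s'.comp d' := by
  refine SimplexAlg.algHom_ext fun l _ => ?_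
  rcases lt_trichotomy l j with hl | hl | hl <;>
    rcases lt_trichotomy (l + 1) i with hl' | hl' | hl' <;>
    first
    | omega
    | simp (disch := omega) only [AlgHom.comp_apply, map_add, map_zero, Nat.add_sub_cancel,
        Nat.sub_add_cancel, hs.map_tvNat_of_lt, hs.map_tvNat_of_eq, hs.map_tvNat_of_gt,
        hs'.map_tvNat_of_lt, hs'.map_tvNat_of_eq, hs'.map_tvNat_of_gt, hd.map_tvNat_of_lt,
        hd.map_tvNat_of_eq, hd.map_tvNat_of_gt, hd'.map_tvNat_of_lt, hd'.map_tvNat_of_eq,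
        hd'.map_tvNat_of_gt]

end SimplicialIdentities

section TailSum

variable {m n r j : ℕ}

theorem IsFace.map_tailSum_of_lt {d : SimplexAlg k (m + 2) →ₐ[k] SimplexAlg k (m + 1)}
    (hd : IsFace k (m + 1) r d) (hrj : r < j) :
    d (tailSum k (m + 1) j) = tailSum k m (j - 1) := by
  rw [tailSum_eq_sum_Ico, hd.map_sum_Ico_succ_succ hrj.le, tailSum_eq_sum_Ico,
    Nat.sub_add_cancel (by omega)]

theorem IsFace.map_tailSum_of_gt {d : SimplexAlg k (m + 2) →ₐ[k] SimplexAlg k (m + 1)}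
    (hd : IsFace k (m + 1) r d) (hjr : j < r) (hr : r ≤ m + 2) :
    d (tailSum k (m + 1) j) = tailSum k m j := by
  rw [tailSum_eq_sum_Ico, hd.map_sum_Ico_succ_right hr hjr hr, tailSum_eq_sum_Ico]

theorem IsFace.map_tailSum_succ {d : SimplexAlg k (n + 1) →ₐ[k] SimplexAlg k n}
    (hd : IsFace k n (j + 1) d) (hj : j ≤ n) : d (tailSum k n (j + 1)) = d (tailSum k n j) := by
  rw [tailSum_eq_sum_Ico, tailSum_eq_sum_Ico, hd.map_sum_Ico_succ_succ le_rfl,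
    hd.map_sum_Ico_succ_right (by omega) le_rfl (by omega)]

end TailSum

section ScaledPolyExt

variable {A B D : Type*} [CommRing A] [CommRing B] [CommRing D] [Algebra k A] [Algebra k B]
  [Algebra k D]

/-- `F` is the coefficientwise extension of `f` followed by the substitution `t ↦ c t`:
`IsPolyExt` is the case `c = 1` and `IsHtpy` the case `c = tailSum`. -/
def IsScaledPolyExt (c : B) (f : A →ₐ[k] B) (F : Polynomial A →ₐ[k] Polynomial B) : Prop :=
  F Polynomial.X = Polynomial.C c * Polynomial.X ∧
  ∀ a, F (Polynomial.C a) = Polynomial.C (f a)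

theorem IsPolyExt.isScaledPolyExt {f : A →ₐ[k] B} {F : Polynomial A →ₐ[k] Polynomial B}
    (hF : IsPolyExt f F) : IsScaledPolyExt 1 f F :=
  ⟨by rw [hF.1, map_one, one_mul], hF.2⟩

theorem IsHtpy.isScaledPolyExt {n j : ℕ} {s : SimplexAlg k n →ₐ[k] SimplexAlg k (n + 1)}
    {h : Polynomial (SimplexAlg k n) →ₐ[k] Polynomial (SimplexAlg k (n + 1))}
    (hh : IsHtpy k n j s h) : IsScaledPolyExt (tailSum k n j) s h :=
  hh

theorem IsScaledPolyExt.comp {c : B} {c' : D} {f : A →ₐ[k] B} {g : B →ₐ[k] D}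
    {F : Polynomial A →ₐ[k] Polynomial B} {G : Polynomial B →ₐ[k] Polynomial D}
    (hF : IsScaledPolyExt c f F) (hG : IsScaledPolyExt c' g G) :
    IsScaledPolyExt (g c * c') (g.comp f) (G.comp F) := by
  refine ⟨?_, fun a => by rw [AlgHom.comp_apply, hF.2, hG.2, AlgHom.comp_apply]⟩
  rw [AlgHom.comp_apply, hF.1, map_mul, hG.2, hG.1, map_mul, mul_assoc]

theorem IsScaledPolyExt.ext {c c' : B} {f f' : A →ₐ[k] B}
    {F F' : Polynomial A →ₐ[k] Polynomial B} (hF : IsScaledPolyExt c f F)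
    (hF' : IsScaledPolyExt c' f' F') (hc : c = c') (hf : f = f') : F = F' :=
  Polynomial.algHom_ext' (AlgHom.ext fun a => by
      change F (Polynomial.C a) = F' (Polynomial.C a); rw [hF.2, hF'.2, hf])
    (by rw [hF.1, hF'.1, hc])

end ScaledPolyExt

end FaceCompHtpy

/-- the simplicial-homotopy identities of the maps `h_j` with respect to the face
maps (all face maps extended coefficientwise to the polynomial rings, fixing `t`):
(a) `d_i ∘ h_j = h_{j-1} ∘ d_i : Δ_n[t] → Δ_n[t]` for `0 ≤ i < j ≤ n`, `n ≥ 1` (here `n = m+1`);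
(b) `d_{j+1} ∘ h_{j+1} = d_{j+1} ∘ h_j : Δ_n[t] → Δ_n[t]` for `0 ≤ j ≤ n - 1`;
(c) `d_i ∘ h_j = h_j ∘ d_{i-1} : Δ_n[t] → Δ_n[t]` for `0 ≤ j`, `j+1 < i ≤ n+1`, `n ≥ 1`
    (here `n = m+1`). -/
theorem face_comp_htpy (k : Type*) [CommRing k] :
    (∀ (m i j : ℕ), i < j → j ≤ m + 1 →
      ∀ (sj : SimplexAlg k (m + 1) →ₐ[k] SimplexAlg k (m + 2)), IsDegen k (m + 1) j sj →
      ∀ (hj : Polynomial (SimplexAlg k (m + 1)) →ₐ[k] Polynomial (SimplexAlg k (m + 2))),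
        IsHtpy k (m + 1) j sj hj →
      ∀ (di : SimplexAlg k (m + 2) →ₐ[k] SimplexAlg k (m + 1)), IsFace k (m + 1) i di →
      ∀ (Di : Polynomial (SimplexAlg k (m + 2)) →ₐ[k] Polynomial (SimplexAlg k (m + 1))),
        IsPolyExt di Di →
      ∀ (di' : SimplexAlg k (m + 1) →ₐ[k] SimplexAlg k m), IsFace k m i di' →
      ∀ (Di' : Polynomial (SimplexAlg k (m + 1)) →ₐ[k] Polynomial (SimplexAlg k m)),
        IsPolyExt di' Di' →
      ∀ (sj' : SimplexAlg k m →ₐ[k] SimplexAlg k (m + 1)), IsDegen k m (j - 1) sj' →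
      ∀ (hj' : Polynomial (SimplexAlg k m) →ₐ[k] Polynomial (SimplexAlg k (m + 1))),
        IsHtpy k m (j - 1) sj' hj' →
        Di.comp hj = hj'.comp Di') ∧
    (∀ (n j : ℕ), j + 1 ≤ n →
      ∀ (sj : SimplexAlg k n →ₐ[k] SimplexAlg k (n + 1)), IsDegen k n j sj →
      ∀ (hj : Polynomial (SimplexAlg k n) →ₐ[k] Polynomial (SimplexAlg k (n + 1))),
        IsHtpy k n j sj hj →
      ∀ (sj1 : SimplexAlg k n →ₐ[k] SimplexAlg k (n + 1)), IsDegen k n (j + 1) sj1 →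
      ∀ (hj1 : Polynomial (SimplexAlg k n) →ₐ[k] Polynomial (SimplexAlg k (n + 1))),
        IsHtpy k n (j + 1) sj1 hj1 →
      ∀ (dj1 : SimplexAlg k (n + 1) →ₐ[k] SimplexAlg k n), IsFace k n (j + 1) dj1 →
      ∀ (Dj1 : Polynomial (SimplexAlg k (n + 1)) →ₐ[k] Polynomial (SimplexAlg k n)),
        IsPolyExt dj1 Dj1 →
        Dj1.comp hj1 = Dj1.comp hj) ∧
    (∀ (m i j : ℕ), j + 1 < i → i ≤ m + 2 →
      ∀ (sj : SimplexAlg k (m + 1) →ₐ[k] SimplexAlg k (m + 2)), IsDegen k (m + 1) j sj →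
      ∀ (hj : Polynomial (SimplexAlg k (m + 1)) →ₐ[k] Polynomial (SimplexAlg k (m + 2))),
        IsHtpy k (m + 1) j sj hj →
      ∀ (di : SimplexAlg k (m + 2) →ₐ[k] SimplexAlg k (m + 1)), IsFace k (m + 1) i di →
      ∀ (Di : Polynomial (SimplexAlg k (m + 2)) →ₐ[k] Polynomial (SimplexAlg k (m + 1))),
        IsPolyExt di Di →
      ∀ (di' : SimplexAlg k (m + 1) →ₐ[k] SimplexAlg k m), IsFace k m (i - 1) di' →
      ∀ (Di' : Polynomial (SimplexAlg k (m + 1)) →ₐ[k] Polynomial (SimplexAlg k m)),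
        IsPolyExt di' Di' →
      ∀ (sj' : SimplexAlg k m →ₐ[k] SimplexAlg k (m + 1)), IsDegen k m j sj' →
      ∀ (hj' : Polynomial (SimplexAlg k m) →ₐ[k] Polynomial (SimplexAlg k (m + 1))),
        IsHtpy k m j sj' hj' →
        Di.comp hj = hj'.comp Di') := by
  refine ⟨?_, ?_, ?_⟩
  · intro m i j hij hjm sj hsj hj hhj di hdi Di hDi di' hdi' Di' hDi' sj' hsj' hj' hhj'
    refine (hhj.isScaledPolyExt.comp hDi.isScaledPolyExt).ext
      (hDi'.isScaledPolyExt.comp hhj'.isScaledPolyExt) ?_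
      (face_comp_degen_of_lt hdi hsj hdi' hsj' hij hjm)
    rw [mul_one, map_one, one_mul, hdi.map_tailSum_of_lt hij]
  · intro n j hjn sj hsj hj hhj sj1 hsj1 hj1 hhj1 dj1 hdj1 Dj1 hDj1
    refine (hhj1.isScaledPolyExt.comp hDj1.isScaledPolyExt).ext
      (hhj.isScaledPolyExt.comp hDj1.isScaledPolyExt)
      (by rw [hdj1.map_tailSum_succ (by omega)]) ?_
    rw [face_comp_degen_self hdj1 hsj1 hjn, face_succ_comp_degen hdj1 hsj (by omega)]
  · intro m i j hji him sj hsj hj hhj di hdi Di hDi di' hdi' Di' hDi' sj' hsj' hj' hhj'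
    refine (hhj.isScaledPolyExt.comp hDi.isScaledPolyExt).ext
      (hDi'.isScaledPolyExt.comp hhj'.isScaledPolyExt) ?_
      (face_comp_degen_of_succ_lt hdi hsj hdi' hsj' hji him)
    rw [mul_one, map_one, one_mul, hdi.map_tailSum_of_gt (by omega) him]
end
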